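/- For c > -1 and nonnegative integers n₁, n₂, the generalized Laguerre polynomials satisfy the weighted orthogonality ∫₀^∞ s^c e^{-s} L_{n₁}^c(s) L_{n₂}^c(s) ds = (Γ(n₁ + c + 1)/n₁!) δ_{n₁,n₂}. -/

import Mathlib

open MeasureTheory Real

open Finset in
noncomputable def altSum (n m : ℕ) (x : ℝ) : ℝ :=
  ∑ k ∈ range (n + 1), (-1 : ℝ) ^ k * (n.choose k) * ∏ i ∈ range m, (x + k + i)

open Finset in
lemma prod_shift (m : ℕ) (y : ℝ) :
    ∏ i ∈ range (m + 1), (y + i) = y * ∏ i ∈ range m, (y + 1 + i) := by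
  rw [Finset.prod_range_succ']
  rw [show (∏ i ∈ range m, (y + ↑(i + 1))) = ∏ i ∈ range m, (y + 1 + i) from
    Finset.prod_congr rfl (fun i _ => by push_cast; ring)]
  push_cast; ring

open Finset in
lemma prod_diff (m : ℕ) (y : ℝ) :
    (∏ i ∈ range (m + 1), (y + 1 + i)) - ∏ i ∈ range (m + 1), (y + i)
      = (m + 1) * ∏ i ∈ range m, (y + 1 + i) := by
  rw [prod_shift m y, Finset.prod_range_succ]
  ring

open Finset in
lemma altSum_rec (n m : ℕ) (x : ℝ) :
    altSum (n + 1) (m + 1) x = -(m + 1) * altSum n m (x + 1) := by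
  set g : ℕ → ℝ := fun k => ∏ i ∈ range (m + 1), (x + k + i) with hg
  have hsplit : altSum (n + 1) (m + 1) x
      = (∑ k ∈ range (n + 1), (-1 : ℝ) ^ (k + 1) * (((n + 1).choose (k + 1) : ℕ)) * g (k + 1))
        + g 0 := by
    rw [altSum, Finset.sum_range_succ'
      (fun k => (-1 : ℝ) ^ k * (((n + 1).choose k : ℕ)) * g k) (n + 1)]
    simp [hg]
  have hA : (∑ k ∈ range (n + 1), (-1 : ℝ) ^ (k + 1) * ((n.choose (k + 1) : ℕ)) * g (k + 1))
      = (∑ k ∈ range (n + 1), (-1 : ℝ) ^ k * ((n.choose k : ℕ)) * g k) - g 0 := by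
    have e := Finset.sum_range_succ'
      (fun k => (-1 : ℝ) ^ k * ((n.choose k : ℕ)) * g k) (n + 1)
    rw [Finset.sum_range_succ] at e
    simp only [Nat.choose_succ_self, Nat.cast_zero, mul_zero, add_zero, zero_mul,
      pow_zero, Nat.choose_zero_right, Nat.cast_one, one_mul] at e
    linarith
  have key : altSum (n + 1) (m + 1) x
      = ∑ k ∈ range (n + 1), (-1 : ℝ) ^ k * ((n.choose k : ℕ)) * (g k - g (k + 1)) := by
    rw [hsplit]
    have hc : ∀ k ∈ range (n + 1), (-1 : ℝ) ^ (k + 1) * (((n + 1).choose (k + 1) : ℕ)) * g (k + 1)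
        = (-1 : ℝ) ^ (k + 1) * ((n.choose (k + 1) : ℕ)) * g (k + 1)
          + (-1 : ℝ) ^ (k + 1) * ((n.choose k : ℕ)) * g (k + 1) := by
      intro k _
      rw [Nat.choose_succ_succ']
      push_cast
      ring
    rw [Finset.sum_congr rfl hc, Finset.sum_add_distrib, hA]
    rw [show (∑ k ∈ range (n + 1), (-1 : ℝ) ^ k * ((n.choose k : ℕ)) * (g k - g (k + 1)))
        = (∑ k ∈ range (n + 1), (-1 : ℝ) ^ k * ((n.choose k : ℕ)) * g k)
          + ∑ k ∈ range (n + 1), (-1 : ℝ) ^ (k + 1) * ((n.choose k : ℕ)) * g (k + 1) from by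
      rw [← Finset.sum_add_distrib]
      exact Finset.sum_congr rfl (fun k _ => by ring)]
    ring
  rw [key, altSum, Finset.mul_sum]
  apply Finset.sum_congr rfl
  intro k _
  have hd := prod_diff m (x + k)
  have e1 : g (k + 1) = ∏ i ∈ range (m + 1), (x + ↑k + 1 + (i : ℝ)) := by
    simp only [hg]
    exact Finset.prod_congr rfl (fun i _ => by push_cast; ring)
  have e2 : (∏ i ∈ range m, (x + ↑k + 1 + (i : ℝ))) = ∏ i ∈ range m, (x + 1 + k + i) :=
    Finset.prod_congr rfl (fun i _ => by ring)
  have hgk : g k - g (k + 1) = -((m : ℝ) + 1) * ∏ i ∈ range m, (x + 1 + k + i) := by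
    rw [e1, ← e2]
    simp only [hg]
    linarith
  rw [hgk]
  ring

open Finset in
lemma altSum_zero (n : ℕ) (x : ℝ) :
    altSum n 0 x = if n = 0 then 1 else 0 := by
  have h := @Int.alternating_sum_range_choose n
  have h2 : altSum n 0 x = ((∑ i ∈ range (n + 1), (-1 : ℤ) ^ i * n.choose i : ℤ) : ℝ) := by
    rw [altSum]; push_cast; simp
  rw [h2, h]
  split <;> simp

open Finset in
lemma altSum_eq (n : ℕ) : ∀ m : ℕ, ∀ x : ℝ, m ≤ n →
    altSum n m x = if m = n then (-1 : ℝ) ^ n * n.factorial else 0 := by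
  induction n with
  | zero =>
    intro m x hm
    interval_cases m
    simp [altSum_zero]
  | succ n ih =>
    intro m x hm
    cases m with
    | zero => rw [altSum_zero]; simp
    | succ m' =>
      rw [altSum_rec, ih m' (x + 1) (Nat.lt_succ_iff.mp hm)]
      by_cases h : m' = n
      · subst h
        simp only [if_pos rfl, Nat.factorial_succ]
        push_cast
        ring
      · simp [h, fun hh => h (Nat.succ_injective hh)]

open Finset in
lemma Gamma_prod (x : ℝ) (hx : 0 < x) (m : ℕ) :
    Real.Gamma (x + m) = Real.Gamma x * ∏ i ∈ range m, (x + i) := by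
  induction m with
  | zero => simp
  | succ m ih =>
    rw [show x + ((m : ℕ) + 1 : ℕ) = (x + m) + 1 from by push_cast; ring,
      Real.Gamma_add_one (by positivity), ih, Finset.prod_range_succ]
    ring

open Finset in
lemma key_sum (c : ℝ) (hc : -1 < c) (n₁ n₂ : ℕ) (h : n₂ ≤ n₁) :
    ∑ j ∈ range (n₂ + 1), ∑ k ∈ range (n₁ + 1),
      ((-1 : ℝ) ^ k * (Real.Gamma (n₁ + c + 1) /
          (Real.Gamma (c + k + 1) * (Nat.factorial (n₁ - k)))) / (Nat.factorial k)) *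
        ((-1 : ℝ) ^ j * (Real.Gamma (n₂ + c + 1) /
          (Real.Gamma (c + j + 1) * (Nat.factorial (n₂ - j)))) / (Nat.factorial j)) *
        Real.Gamma (c + k + j + 1)
      = Real.Gamma (n₁ + c + 1) / Nat.factorial n₁ * (if n₁ = n₂ then 1 else 0) := by
  have hΓpos : ∀ t : ℝ, 0 < t → Real.Gamma t ≠ 0 := fun t ht => (Real.Gamma_pos_of_pos ht).ne'
  have hinner : ∀ j ∈ range (n₂ + 1),
      ∑ k ∈ range (n₁ + 1),
        ((-1 : ℝ) ^ k * (Real.Gamma (n₁ + c + 1) /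
            (Real.Gamma (c + k + 1) * (Nat.factorial (n₁ - k)))) / (Nat.factorial k)) *
          ((-1 : ℝ) ^ j * (Real.Gamma (n₂ + c + 1) /
            (Real.Gamma (c + j + 1) * (Nat.factorial (n₂ - j)))) / (Nat.factorial j)) *
          Real.Gamma (c + k + j + 1)
      = ((-1 : ℝ) ^ j * (Real.Gamma (n₂ + c + 1) /
            (Real.Gamma (c + j + 1) * (Nat.factorial (n₂ - j)))) / (Nat.factorial j)) *
        (Real.Gamma (n₁ + c + 1) / Nat.factorial n₁) *
        (if j = n₁ then (-1 : ℝ) ^ n₁ * n₁.factorial else 0) := by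
    intro j hj
    have hjn : j ≤ n₁ := le_trans (Nat.lt_succ_iff.mp (Finset.mem_range.mp hj)) h
    rw [← altSum_eq n₁ j (c + 1) hjn, altSum, Finset.mul_sum]
    apply Finset.sum_congr rfl
    intro k hk
    have hkn : k ≤ n₁ := Nat.lt_succ_iff.mp (Finset.mem_range.mp hk)
    have hpos : (0 : ℝ) < c + k + 1 := by
      have : (0:ℝ) ≤ (k:ℝ) := Nat.cast_nonneg k
      linarith
    have hΓsplit : Real.Gamma (c + k + j + 1)
        = Real.Gamma (c + k + 1) * ∏ i ∈ range j, (c + 1 + k + i) := by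
      rw [show c + (k:ℝ) + (j:ℝ) + 1 = (c + k + 1) + (j : ℕ) from by push_cast; ring,
        Gamma_prod (c + k + 1) hpos j]
      congr 1
      exact Finset.prod_congr rfl (fun i _ => by ring)
    rw [hΓsplit]
    have hfact : ((n₁.choose k : ℝ)) * (Nat.factorial k) * (Nat.factorial (n₁ - k))
        = Nat.factorial n₁ := by
      exact_mod_cast congrArg (Nat.cast : ℕ → ℝ)
        (Nat.choose_mul_factorial_mul_factorial hkn)
    have hG : Real.Gamma (c + k + 1) ≠ 0 := hΓpos _ hpos
    have hf1 : (Nat.factorial (n₁ - k) : ℝ) ≠ 0 := Nat.cast_ne_zero.mpr (Nat.factorial_ne_zero _)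
    have hf2 : (Nat.factorial k : ℝ) ≠ 0 := Nat.cast_ne_zero.mpr (Nat.factorial_ne_zero _)
    have hfn : (Nat.factorial n₁ : ℝ) ≠ 0 := Nat.cast_ne_zero.mpr (Nat.factorial_ne_zero _)
    have h1 : Real.Gamma (n₁ + c + 1) / (Real.Gamma (c + k + 1) * (Nat.factorial (n₁ - k))) /
          (Nat.factorial k) * (Real.Gamma (c + k + 1) * ∏ i ∈ range j, (c + 1 + k + i))
        = Real.Gamma (n₁ + c + 1) * (∏ i ∈ range j, (c + 1 + k + i)) * (n₁.choose k) /
          (Nat.factorial n₁) := by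
      field_simp
      linear_combination (-(Real.Gamma (n₁ + c + 1) * (∏ i ∈ range j, (c + 1 + (k:ℝ) + i)))) * hfact
    linear_combination ((-1 : ℝ) ^ k * ((-1 : ℝ) ^ j * (Real.Gamma (n₂ + c + 1) /
      (Real.Gamma (c + j + 1) * (Nat.factorial (n₂ - j)))) / (Nat.factorial j))) * h1
  rw [Finset.sum_congr rfl hinner]
  by_cases hn : n₁ = n₂
  · subst hn
    rw [Finset.sum_eq_single_of_mem n₁ (Finset.self_mem_range_succ n₁)
      (fun j _ hjne => by rw [if_neg hjne]; ring)]
    rw [if_pos rfl, if_pos rfl]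
    rw [show c + (n₁ : ℝ) + 1 = (n₁ : ℝ) + c + 1 from by ring]
    have hΓ : Real.Gamma ((n₁ : ℝ) + c + 1) ≠ 0 := by
      apply hΓpos; have : (0:ℝ) ≤ (n₁:ℝ) := Nat.cast_nonneg n₁; linarith
    have hfn : (Nat.factorial n₁ : ℝ) ≠ 0 := Nat.cast_ne_zero.mpr (Nat.factorial_ne_zero _)
    have hsq : (-1 : ℝ) ^ n₁ * (-1) ^ n₁ = 1 := by rw [← mul_pow]; norm_num
    simp only [Nat.sub_self, Nat.factorial_zero, Nat.cast_one, mul_one]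
    field_simp
    linear_combination hsq
  · rw [if_neg hn]
    rw [Finset.sum_eq_zero, mul_zero]
    intro j hj
    have : j ≠ n₁ := by
      have := Nat.lt_succ_iff.mp (Finset.mem_range.mp hj)
      omega
    rw [if_neg this]; ring

/-- Generalized Laguerre polynomial `L_n^c(x)` via the explicit sum. -/
noncomputable def genLaguerre (n : ℕ) (c x : ℝ) : ℝ :=
  ∑ k ∈ Finset.range (n + 1),
    (-1) ^ k * (Real.Gamma (n + c + 1) /
      (Real.Gamma (c + k + 1) * (Nat.factorial (n - k)))) * x ^ k / (Nat.factorial k)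

open Finset in
lemma integral_expand (c : ℝ) (hc : -1 < c) (n₁ n₂ : ℕ) :
    ∫ s in Set.Ioi (0 : ℝ),
        s ^ c * Real.exp (-s) * genLaguerre n₁ c s * genLaguerre n₂ c s
      = ∑ j ∈ range (n₂ + 1), ∑ k ∈ range (n₁ + 1),
          ((-1 : ℝ) ^ k * (Real.Gamma (n₁ + c + 1) /
              (Real.Gamma (c + k + 1) * (Nat.factorial (n₁ - k)))) / (Nat.factorial k)) *
            ((-1 : ℝ) ^ j * (Real.Gamma (n₂ + c + 1) /
              (Real.Gamma (c + j + 1) * (Nat.factorial (n₂ - j)))) / (Nat.factorial j)) *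
            Real.Gamma (c + k + j + 1) := by
  have hpos : ∀ k j : ℕ, (0 : ℝ) < c + k + j + 1 := by
    intro k j
    have h1 : (0:ℝ) ≤ (k:ℝ) := Nat.cast_nonneg k
    have h2 : (0:ℝ) ≤ (j:ℝ) := Nat.cast_nonneg j
    linarith
  have heq : Set.EqOn
      (fun s => s ^ c * Real.exp (-s) * genLaguerre n₁ c s * genLaguerre n₂ c s)
      (fun s => ∑ j ∈ range (n₂ + 1), ∑ k ∈ range (n₁ + 1),
          (((-1 : ℝ) ^ k * (Real.Gamma (n₁ + c + 1) /
              (Real.Gamma (c + k + 1) * (Nat.factorial (n₁ - k)))) / (Nat.factorial k)) *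
            ((-1 : ℝ) ^ j * (Real.Gamma (n₂ + c + 1) /
              (Real.Gamma (c + j + 1) * (Nat.factorial (n₂ - j)))) / (Nat.factorial j))) *
            (Real.exp (-s) * s ^ (c + k + j + 1 - 1)))
      (Set.Ioi 0) := by
    intro s hs
    have hs' : (0 : ℝ) < s := hs
    simp only [genLaguerre]
    rw [Finset.mul_sum]
    apply Finset.sum_congr rfl
    intro j _
    rw [Finset.mul_sum, Finset.sum_mul]
    apply Finset.sum_congr rfl
    intro k _
    have hr : s ^ (c + (k:ℝ) + (j:ℝ) + 1 - 1) = s ^ c * s ^ (k:ℕ) * s ^ (j:ℕ) := by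
      rw [show c + (k:ℝ) + (j:ℝ) + 1 - 1 = c + (k:ℝ) + (j:ℝ) from by ring,
        Real.rpow_add hs', Real.rpow_add hs', Real.rpow_natCast, Real.rpow_natCast]
    rw [hr]
    ring
  rw [setIntegral_congr_fun measurableSet_Ioi heq]
  rw [integral_finset_sum]
  · apply Finset.sum_congr rfl
    intro j _
    rw [integral_finset_sum]
    · apply Finset.sum_congr rfl
      intro k _
      rw [MeasureTheory.integral_const_mul,
        ← Real.Gamma_eq_integral (by have := hpos k j; linarith : (0:ℝ) < c + k + j + 1)]
    · intro k _
      exact ((Real.GammaIntegral_convergent (hpos k j)).const_mul _)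
  · intro j _
    apply integrable_finset_sum
    intro k _
    exact ((Real.GammaIntegral_convergent (hpos k j)).const_mul _)

theorem stmt1 (c : ℝ) (hc : -1 < c) (n₁ n₂ : ℕ) :
    ∫ s in Set.Ioi (0 : ℝ),
        s ^ c * Real.exp (-s) * genLaguerre n₁ c s * genLaguerre n₂ c s
      = (Real.Gamma (n₁ + c + 1) / Nat.factorial n₁) *
        (if n₁ = n₂ then 1 else 0) := by
  rcases le_total n₂ n₁ with h | h
  · rw [integral_expand c hc n₁ n₂, key_sum c hc n₁ n₂ h]
  · have hswap : (∫ s in Set.Ioi (0:ℝ),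
          s ^ c * Real.exp (-s) * genLaguerre n₁ c s * genLaguerre n₂ c s)
        = ∫ s in Set.Ioi (0:ℝ),
          s ^ c * Real.exp (-s) * genLaguerre n₂ c s * genLaguerre n₁ c s := by
      apply setIntegral_congr_fun measurableSet_Ioi
      intro s _
      ring
    rw [hswap, integral_expand c hc n₂ n₁, key_sum c hc n₂ n₁ h]
    by_cases he : n₁ = n₂
    · subst he; simp
    · have he2 : ¬ (n₂ = n₁) := fun hh => he hh.symm
      simp [he, he2]
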